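/- arXiv:2203.13096 — 5 statements merged into one kernel-verified Lean document; each statement's English description precedes it below -/
import Mathlib

section
/- Let (Ω,𝒜,μ) be a σ-finite diffuse measure space and let 1 ≤ p < ∞. Then for every u ∈ L∞(μ) and every compact linear operator K on L_p(μ), one has ‖M_u + K‖ ≥ ‖M_u‖ = ‖u‖_∞; consequently the essential norm of M_u on L_p(μ) equals ‖u‖_∞. -/
open MeasureTheory Filter ENNReal

/-- A measurable set `B` is an atom of `μ`. -/
def IsAtomSet {Ω : Type*} [MeasurableSpace Ω] (μ : Measure Ω) (B : Set Ω) : Prop :=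
  MeasurableSet B ∧ 0 < μ B ∧ ∀ B' ⊆ B, MeasurableSet B' → μ B' = 0 ∨ μ B' = μ B

/-- A measure is diffuse (nonatomic) if it has no atoms. -/
def IsDiffuse {Ω : Type*} [MeasurableSpace Ω] (μ : Measure Ω) : Prop :=
  ∀ B : Set Ω, ¬ IsAtomSet μ B

open Function

/-!
If `c < ‖u‖_∞`, the set `{c ≤ ‖u‖}` has positive measure, and diffuseness splits it into
infinitely many disjoint pieces of finite positive measure. The normalized indicators `g n` of
these pieces are unit vectors with `1 ≤ ‖g n - g m‖` and `c * ‖g n - g m‖ ≤ ‖M_u (g n - g m)‖`.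
A compact `K` maps them into a compact set, so `‖K (g n - g m)‖` is arbitrarily small for some
`n ≠ m`, which forces `c ≤ ‖M_u + K‖`. The bound `‖M_u‖ ≤ ‖u‖_∞` is Hölder's inequality.
-/

theorem Set.exists_pairwise_disjoint_of_forall_split {α : Type*} {P : Set α → Prop}
    (hsplit : ∀ S, P S → ∃ B ⊆ S, P B ∧ P (S \ B)) {S : Set α} (hS : P S) :
    ∃ t : ℕ → Set α, (∀ n, t n ⊆ S) ∧ (∀ n, P (t n)) ∧ Pairwise (Disjoint on t) := by
  choose B hBS hB hrest using hsplit
  let rest : ℕ → {S // P S} := fun n =>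
    Nat.rec ⟨S, hS⟩ (fun _ R => ⟨R.1 \ B R.1 R.2, hrest R.1 R.2⟩) n
  have hanti : Antitone fun n => (rest n).1 :=
    antitone_nat_of_succ_le fun n => Set.sdiff_subset
  refine ⟨fun n => B (rest n).1 (rest n).2, fun n => (hBS _ _).trans (hanti n.zero_le),
    fun n => hB _ _, (pairwise_disjoint_on _).2 fun n m hnm => ?_⟩
  have hm : B (rest m).1 (rest m).2 ⊆ (rest n).1 \ B (rest n).1 (rest n).2 :=
    (hBS _ _).trans (hanti hnm)
  exact Set.disjoint_right.2 fun x hx => (hm hx).2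

namespace IsDiffuse

variable {Ω : Type*} [MeasurableSpace Ω] {μ : Measure Ω}

theorem exists_subset_diff_pos (hd : IsDiffuse μ) {S : Set Ω} (hS : MeasurableSet S)
    (h0 : 0 < μ S) : ∃ B ⊆ S, MeasurableSet B ∧ 0 < μ B ∧ 0 < μ (S \ B) := by
  obtain ⟨B, hBS, hB, hB0, hBS'⟩ : ∃ B ⊆ S, MeasurableSet B ∧ μ B ≠ 0 ∧ μ B ≠ μ S := by
    simpa [IsAtomSet, hS, h0] using hd S
  refine ⟨B, hBS, hB, pos_iff_ne_zero.2 hB0, ?_⟩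
  exact (tsub_pos_iff_lt.2 ((measure_mono hBS).lt_of_ne hBS')).trans_le le_measure_sdiff

theorem exists_pairwise_disjoint [SigmaFinite μ] (hd : IsDiffuse μ) {A : Set Ω}
    (hA : MeasurableSet A) (h0 : 0 < μ A) :
    ∃ t : ℕ → Set Ω, (∀ n, t n ⊆ A) ∧
      (∀ n, MeasurableSet (t n) ∧ 0 < μ (t n) ∧ μ (t n) < ∞) ∧ Pairwise (Disjoint on t) := by
  obtain ⟨S, hS, hSA, hS0, hSfin⟩ := Measure.exists_subset_measure_lt_top hA h0
  obtain ⟨t, htS, ht, hdisj⟩ := Set.exists_pairwise_disjoint_of_forall_split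
    (P := fun S => MeasurableSet S ∧ 0 < μ S ∧ μ S < ∞) (fun S ⟨hS, hS0, hSfin⟩ => by
      obtain ⟨B, hBS, hB, hB0, hSB0⟩ := hd.exists_subset_diff_pos hS hS0
      exact ⟨B, hBS, ⟨hB, hB0, (measure_mono hBS).trans_lt hSfin⟩,
        ⟨hS.diff hB, hSB0, (measure_mono Set.sdiff_subset).trans_lt hSfin⟩⟩) ⟨hS, hS0, hSfin⟩
  exact ⟨t, fun n => (htS n).trans hSA, ht, hdisj⟩

end IsDiffuse

theorem IsCompactOperator.exists_ne_norm_apply_sub_lt {𝕜 E F : Type*} [NontriviallyNormedField 𝕜]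
    [SeminormedAddCommGroup E] [NormedSpace 𝕜 E] [SeminormedAddCommGroup F] [NormedSpace 𝕜 F]
    {K : E →L[𝕜] F} (hK : IsCompactOperator K) {f : ℕ → E} {R : ℝ} (hf : ∀ n, ‖f n‖ ≤ R)
    {ε : ℝ} (hε : 0 < ε) : ∃ n m, n ≠ m ∧ ‖K (f n - f m)‖ < ε := by
  obtain ⟨C, hC, hKC⟩ := hK.image_closedBall_subset_compact (f := (K : E →ₗ[𝕜] F)) R
  obtain ⟨a, -, φ, hφ, hlim⟩ := hC.tendsto_subseq fun n =>
    hKC ⟨f n, mem_closedBall_zero_iff.2 (hf n), rfl⟩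
  obtain ⟨N, hN⟩ := Metric.cauchySeq_iff'.1 hlim.cauchySeq ε hε
  refine ⟨φ (N + 1), φ N, hφ.injective.ne N.succ_ne_self, ?_⟩
  simpa [map_sub, dist_eq_norm] using hN (N + 1) N.le_succ

theorem le_opNorm_add_of_isCompactOperator {𝕜 E F : Type*} [NontriviallyNormedField 𝕜]
    [SeminormedAddCommGroup E] [NormedSpace 𝕜 E] [SeminormedAddCommGroup F] [NormedSpace 𝕜 F]
    {T K : E →L[𝕜] F} (hK : IsCompactOperator K) {f : ℕ → E} {R : ℝ} (hf : ∀ n, ‖f n‖ ≤ R)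
    (hsep : ∀ n m, n ≠ m → 1 ≤ ‖f n - f m‖) {c : ℝ}
    (hT : ∀ n m, n ≠ m → c * ‖f n - f m‖ ≤ ‖T (f n - f m)‖) : c ≤ ‖T + K‖ := by
  refine le_of_forall_pos_le_add fun ε hε => ?_
  obtain ⟨n, m, hnm, hKε⟩ := hK.exists_ne_norm_apply_sub_lt hf hε
  set d := f n - f m
  have hd : 0 < ‖d‖ := one_pos.trans_le (hsep n m hnm)
  refine le_of_mul_le_mul_right ?_ hd
  calc c * ‖d‖ ≤ ‖T d‖ := hT n m hnm
    _ = ‖(T + K) d - K d‖ := by simp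
    _ ≤ ‖T + K‖ * ‖d‖ + ε * ‖d‖ := by
      refine (norm_sub_le _ _).trans (add_le_add ((T + K).le_opNorm d) ?_)
      nlinarith [hsep n m hnm]
    _ = (‖T + K‖ + ε) * ‖d‖ := by ring

section Lp

theorem Lp.norm_le_norm_sub_of_ae_eq_zero_or {Ω E : Type*} [MeasurableSpace Ω]
    [NormedAddCommGroup E] {μ : Measure Ω} {p : ℝ≥0∞} {f g : Lp E p μ}
    (h : ∀ᵐ x ∂μ, f x = 0 ∨ g x = 0) : ‖f‖ ≤ ‖f - g‖ := by
  refine Lp.norm_le_norm_of_ae_le ?_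
  filter_upwards [h, Lp.coeFn_sub f g] with x hx hsub
  rw [hsub, Pi.sub_apply]
  rcases hx with hx | hx <;> simp [hx]

variable {Ω : Type*} [MeasurableSpace Ω] {μ : Measure Ω} {𝕜 : Type*} [RCLike 𝕜]
  {p : ℝ≥0∞} [Fact (1 ≤ p)]

theorem Lp.exists_norm_eq_one_of_measure_pos {s : Set Ω} (hs : MeasurableSet s) (h0 : 0 < μ s)
    (hfin : μ s < ∞) : ∃ g : Lp 𝕜 p μ, ‖g‖ = 1 ∧ ∀ᵐ x ∂μ, g x ≠ 0 → x ∈ s := by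
  set h := indicatorConstLp p hs hfin.ne (1 : 𝕜)
  have hp0 : p ≠ 0 := (zero_lt_one.trans_le Fact.out).ne'
  have hh : h ≠ 0 := by
    rw [← norm_pos_iff, norm_indicatorConstLp' hp0 h0.ne', norm_one, one_mul]
    exact Real.rpow_pos_of_pos (ENNReal.toReal_pos h0.ne' hfin.ne) _
  refine ⟨(‖h‖⁻¹ : 𝕜) • h, norm_smul_inv_norm hh, ?_⟩
  filter_upwards [Lp.coeFn_smul (‖h‖⁻¹ : 𝕜) h,
    indicatorConstLp_coeFn_notMem (p := p) (hs := hs) (hμs := hfin.ne) (c := (1 : 𝕜))]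
    with x hx hxs
  intro hne
  by_contra hxs'
  simp only [hx, Pi.smul_apply, smul_ne_zero_iff] at hne
  exact hne.2 (hxs hxs')

variable {u : Ω → 𝕜} {Mu : Lp 𝕜 p μ →L[𝕜] Lp 𝕜 p μ}

theorem mul_norm_le_norm_apply_of_ae_le
    (hMu : ∀ f : Lp 𝕜 p μ, (Mu f : Ω → 𝕜) =ᵐ[μ] fun x => u x * f x)
    {c : ℝ} (hc : 0 ≤ c) {f : Lp 𝕜 p μ} (h : ∀ᵐ x ∂μ, f x ≠ 0 → c ≤ ‖u x‖) :
    c * ‖f‖ ≤ ‖Mu f‖ := by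
  have hcf : ‖((c : 𝕜) • f)‖ = c * ‖f‖ := by
    rw [norm_smul, RCLike.norm_ofReal, abs_of_nonneg hc]
  rw [← hcf]
  refine Lp.norm_le_norm_of_ae_le ?_
  filter_upwards [h, hMu f, Lp.coeFn_smul (c : 𝕜) f] with x hx hMx hsx
  rw [hMx, hsx, Pi.smul_apply, norm_smul, norm_mul, RCLike.norm_ofReal, abs_of_nonneg hc]
  by_cases hfx : f x = 0
  · simp [hfx]
  · exact mul_le_mul_of_nonneg_right (hx hfx) (norm_nonneg _)

theorem opNorm_le_eLpNorm_top (hu : MemLp u ∞ μ)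
    (hMu : ∀ f : Lp 𝕜 p μ, (Mu f : Ω → 𝕜) =ᵐ[μ] fun x => u x * f x) :
    ‖Mu‖ ≤ (eLpNorm u ∞ μ).toReal := by
  refine Mu.opNorm_le_bound ENNReal.toReal_nonneg fun f => ?_
  have hMf : eLpNorm (Mu f) p μ = eLpNorm (u • ⇑f) p μ := eLpNorm_congr_ae (hMu f)
  rw [Lp.norm_def, Lp.norm_def, hMf, ← ENNReal.toReal_mul]
  exact ENNReal.toReal_mono (ENNReal.mul_ne_top hu.2.ne (Lp.eLpNorm_lt_top f).ne)
    (eLpNorm_smul_le_eLpNorm_top_mul_eLpNorm p (Lp.aestronglyMeasurable f) u)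

theorem exists_measurableSet_le_norm (hu : AEStronglyMeasurable u μ) {c : ℝ} (hc : 0 ≤ c)
    (hcu : c < (eLpNorm u ∞ μ).toReal) :
    ∃ A, MeasurableSet A ∧ 0 < μ A ∧ ∀ᵐ x ∂μ, x ∈ A → c ≤ ‖u x‖ := by
  refine ⟨{x | c ≤ ‖hu.mk u x‖}, measurableSet_le measurable_const
    hu.stronglyMeasurable_mk.norm.measurable, pos_iff_ne_zero.2 fun h0 => hcu.not_ge ?_,
    hu.ae_eq_mk.mono fun x hx hxA => hx ▸ hxA⟩
  rw [eLpNorm_exponent_top]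
  refine ENNReal.toReal_le_of_le_ofReal hc (eLpNormEssSup_le_of_ae_bound ?_)
  filter_upwards [hu.ae_eq_mk, measure_eq_zero_iff_ae_notMem.1 h0] with x hx hxA
  exact hx ▸ (not_le.1 hxA).le

theorem eLpNorm_top_le_opNorm_add_of_isCompactOperator [SigmaFinite μ] (hd : IsDiffuse μ)
    (hu : AEStronglyMeasurable u μ)
    (hMu : ∀ f : Lp 𝕜 p μ, (Mu f : Ω → 𝕜) =ᵐ[μ] fun x => u x * f x)
    {K : Lp 𝕜 p μ →L[𝕜] Lp 𝕜 p μ} (hK : IsCompactOperator K) :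
    (eLpNorm u ∞ μ).toReal ≤ ‖Mu + K‖ := by
  refine le_of_forall_lt_imp_le_of_dense fun c hc => ?_
  rcases lt_or_ge c 0 with hc0 | hc0
  · exact hc0.le.trans (norm_nonneg _)
  obtain ⟨A, hA, hA0, hcA⟩ := exists_measurableSet_le_norm hu hc0 hc
  obtain ⟨t, htA, ht, hdisj⟩ := hd.exists_pairwise_disjoint hA hA0
  choose g hg hgt using fun n =>
    Lp.exists_norm_eq_one_of_measure_pos (𝕜 := 𝕜) (p := p) (ht n).1 (ht n).2.1 (ht n).2.2
  refine le_opNorm_add_of_isCompactOperator hK (fun n => (hg n).le) (fun n m hnm => ?_)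
    fun n m hnm => mul_norm_le_norm_apply_of_ae_le hMu hc0 ?_
  · refine hg n ▸ Lp.norm_le_norm_sub_of_ae_eq_zero_or ?_
    filter_upwards [hgt n, hgt m] with x hn hm
    by_contra! h
    exact Set.disjoint_left.1 (hdisj hnm) (hn h.1) (hm h.2)
  · filter_upwards [Lp.coeFn_sub (g n) (g m), hgt n, hgt m, hcA] with x hsub hn hm hxA hx
    rw [hsub, Pi.sub_apply] at hx
    by_cases hgn : g n x = 0
    · exact hxA (htA m (hm fun hgm => hx (by rw [hgn, hgm, sub_zero])))
    · exact hxA (htA n (hn hgn))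

end Lp

theorem stmt1_general {Ω : Type*} [MeasurableSpace Ω] {𝕜 : Type*} [RCLike 𝕜]
    (μ : Measure Ω) [SigmaFinite μ] (hdiffuse : IsDiffuse μ)
    (p : ℝ≥0∞) [Fact (1 ≤ p)]
    (u : Ω → 𝕜) (hu : MemLp u ∞ μ)
    (Mu : Lp 𝕜 p μ →L[𝕜] Lp 𝕜 p μ)
    (hMu : ∀ f : Lp 𝕜 p μ, (Mu f : Ω → 𝕜) =ᵐ[μ] fun x => u x * f x) :
    (∀ K : Lp 𝕜 p μ →L[𝕜] Lp 𝕜 p μ, IsCompactOperator K → ‖Mu + K‖ ≥ ‖Mu‖) ∧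
    ‖Mu‖ = (eLpNorm u ∞ μ).toReal ∧
    sInf {r : ℝ | ∃ K : Lp 𝕜 p μ →L[𝕜] Lp 𝕜 p μ, IsCompactOperator K ∧ r = ‖Mu + K‖}
      = (eLpNorm u ∞ μ).toReal := by
  have hlower : ∀ K : Lp 𝕜 p μ →L[𝕜] Lp 𝕜 p μ, IsCompactOperator K →
      (eLpNorm u ∞ μ).toReal ≤ ‖Mu + K‖ := fun K hK =>
    eLpNorm_top_le_opNorm_add_of_isCompactOperator hdiffuse hu.1 hMu hK
  have h0 : IsCompactOperator (0 : Lp 𝕜 p μ →L[𝕜] Lp 𝕜 p μ) := isCompactOperator_zero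
  have hnorm : ‖Mu‖ = (eLpNorm u ∞ μ).toReal :=
    (opNorm_le_eLpNorm_top hu hMu).antisymm (by simpa using hlower 0 h0)
  refine ⟨fun K hK => hnorm ▸ hlower K hK, hnorm, IsLeast.csInf_eq ⟨⟨0, h0, ?_⟩, ?_⟩⟩
  · rw [add_zero, hnorm]
  · rintro _ ⟨K, hK, rfl⟩
    exact hlower K hK

theorem stmt1 {Ω : Type*} [MeasurableSpace Ω] {𝕜 : Type*} [RCLike 𝕜]
    (μ : Measure Ω) [SigmaFinite μ] (hdiffuse : IsDiffuse μ)
    (p : ℝ≥0∞) [Fact (1 ≤ p)] (hp : p ≠ ∞)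
    (u : Ω → 𝕜) (hu : MemLp u ∞ μ)
    (Mu : Lp 𝕜 p μ →L[𝕜] Lp 𝕜 p μ)
    (hMu : ∀ f : Lp 𝕜 p μ, (Mu f : Ω → 𝕜) =ᵐ[μ] fun x => u x * f x) :
    (∀ K : Lp 𝕜 p μ →L[𝕜] Lp 𝕜 p μ, IsCompactOperator K → ‖Mu + K‖ ≥ ‖Mu‖) ∧
    ‖Mu‖ = (eLpNorm u ∞ μ).toReal ∧
    sInf {r : ℝ | ∃ K : Lp 𝕜 p μ →L[𝕜] Lp 𝕜 p μ, IsCompactOperator K ∧ r = ‖Mu + K‖}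
      = (eLpNorm u ∞ μ).toReal :=
  stmt1_general μ hdiffuse p u hu Mu hMu
end

section
/- Let (Ω,𝒜,μ) be a σ-finite diffuse measure space, 1 ≤ p < ∞, and let q be the conjugate exponent (1/p + 1/q = 1). Let η ∈ L_q(μ) and g ∈ L_p(μ) with η ≥ 0 and g ≥ 0, and define the positive rank-one operator K on L_p(μ) by K f := (∫ η f dμ) · g. If u ∈ L∞(μ) with u ≥ 0 is such that M_u f ≤ K f for all f ∈ L_p(μ) with f ≥ 0, then u = 0 (a.e.). -/
open MeasureTheory Filter ENNReal

/-!
Suppose `u ≥ ε > 0` on a set of positive measure; shrinking it, we may also assume `|g|, |η| ≤ M`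
there. A diffuse measure has subsets `B` of this set of arbitrarily small positive measure, and
testing the inequality against `f = 𝟙_B` gives `ε ≤ u ≤ (∫_B η) g ≤ M² μ(B)` on `B`, which fails
once `μ(B) < ε / M²`.
-/

namespace IsDiffuse

variable {Ω : Type*} [MeasurableSpace Ω] {μ : Measure Ω} {A : Set Ω}

lemma exists_subset_measure_ne (hd : IsDiffuse μ) (hA : MeasurableSet A) (h0 : 0 < μ A) :
    ∃ B ⊆ A, MeasurableSet B ∧ μ B ≠ 0 ∧ μ B ≠ μ A := by
  simpa [IsAtomSet, hA, h0] using hd A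

lemma exists_subset_measure_pos_lt_top (hd : IsDiffuse μ) (hA : MeasurableSet A)
    (h0 : 0 < μ A) : ∃ B ⊆ A, MeasurableSet B ∧ 0 < μ B ∧ μ B < ∞ := by
  by_cases hfin : μ A < ∞
  · exact ⟨A, subset_rfl, hA, h0, hfin⟩
  obtain ⟨B, hBA, hB, hB0, hBA'⟩ := hd.exists_subset_measure_ne hA h0
  rw [not_lt_top_iff.mp hfin] at hBA'
  exact ⟨B, hBA, hB, pos_iff_ne_zero.mpr hB0, lt_top_iff_ne_top.mpr hBA'⟩

/-- For a non-atom `A`, either `B` or `A \ B` carries at most half of its mass. -/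
lemma exists_subset_measure_pos_le_half (hd : IsDiffuse μ) (hA : MeasurableSet A)
    (h0 : 0 < μ A) (hfin : μ A ≠ ∞) :
    ∃ B ⊆ A, MeasurableSet B ∧ 0 < μ B ∧ μ B ≤ 2⁻¹ * μ A := by
  obtain ⟨B, hBA, hB, hB0, hBA'⟩ := hd.exists_subset_measure_ne hA h0
  have hdiff : μ (A \ B) = μ A - μ B :=
    measure_sdiff hBA hB.nullMeasurableSet (ne_top_of_le_ne_top hfin (measure_mono hBA))
  by_cases hhalf : μ B ≤ 2⁻¹ * μ A
  · exact ⟨B, hBA, hB, pos_iff_ne_zero.mpr hB0, hhalf⟩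
  refine ⟨A \ B, Set.sdiff_subset, hA.diff hB, ?_, ?_⟩
  · rw [hdiff]
    exact tsub_pos_of_lt (lt_of_le_of_ne (measure_mono hBA) hBA')
  · rw [hdiff, tsub_le_iff_right]
    calc μ A = 2⁻¹ * μ A + 2⁻¹ * μ A := by rw [← add_mul, ENNReal.inv_two_add_inv_two, one_mul]
      _ ≤ 2⁻¹ * μ A + μ B := by gcongr; exact (not_le.mp hhalf).le

lemma exists_subset_measure_pos_lt (hd : IsDiffuse μ) (hA : MeasurableSet A) (h0 : 0 < μ A)
    {δ : ℝ≥0∞} (hδ : δ ≠ 0) : ∃ B ⊆ A, MeasurableSet B ∧ 0 < μ B ∧ μ B < δ := by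
  obtain ⟨A₀, hA₀A, hA₀, hA₀0, hA₀fin⟩ := hd.exists_subset_measure_pos_lt_top hA h0
  have halving : ∀ n : ℕ, ∃ B ⊆ A₀, MeasurableSet B ∧ 0 < μ B ∧ μ B ≤ 2⁻¹ ^ n * μ A₀ := by
    intro n
    induction n with
    | zero => exact ⟨A₀, subset_rfl, hA₀, hA₀0, by simp⟩
    | succ n ih =>
      obtain ⟨B, hBA₀, hB, hB0, hBle⟩ := ih
      obtain ⟨C, hCB, hC, hC0, hCle⟩ := hd.exists_subset_measure_pos_le_half hB hB0
        (ne_top_of_le_ne_top hA₀fin.ne (measure_mono hBA₀))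
      refine ⟨C, hCB.trans hBA₀, hC, hC0, ?_⟩
      calc μ C ≤ 2⁻¹ * μ B := hCle
        _ ≤ 2⁻¹ * (2⁻¹ ^ n * μ A₀) := by gcongr
        _ = 2⁻¹ ^ (n + 1) * μ A₀ := by rw [pow_succ', mul_assoc]
  obtain ⟨n, hn⟩ := ENNReal.exists_inv_two_pow_lt (ENNReal.div_pos hδ hA₀fin.ne).ne'
  obtain ⟨B, hBA₀, hB, hB0, hBle⟩ := halving n
  exact ⟨B, hBA₀.trans hA₀A, hB, hB0, hBle.trans_lt (ENNReal.mul_lt_of_lt_div hn)⟩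

end IsDiffuse

section

variable {Ω : Type*} [MeasurableSpace Ω] {μ : Measure Ω} {u g η : Ω → ℝ}

lemma IsDiffuse.measure_setOf_le_of_forall_le_setIntegral_mul (hd : IsDiffuse μ)
    (hu : Measurable u) (hg : Measurable g) (hη : Measurable η)
    (hle : ∀ B, MeasurableSet B → μ B < ∞ → ∀ᵐ x ∂μ, x ∈ B → u x ≤ (∫ y in B, η y ∂μ) * g x)
    {ε : ℝ} (hε : 0 < ε) (M : ℝ) :
    μ {x | ε ≤ u x ∧ |g x| ≤ M ∧ |η x| ≤ M} = 0 := by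
  set A := {x | ε ≤ u x ∧ |g x| ≤ M ∧ |η x| ≤ M}
  have hA : MeasurableSet A :=
    (measurableSet_le measurable_const hu).inter
      ((measurableSet_le hg.abs measurable_const).inter (measurableSet_le hη.abs measurable_const))
  by_contra hA0
  have hδ : ENNReal.ofReal (ε / (M ^ 2 + 1)) ≠ 0 := by
    simp only [ne_eq, ENNReal.ofReal_eq_zero, not_le]; positivity
  obtain ⟨B, hBA, hB, hB0, hBδ⟩ := hd.exists_subset_measure_pos_lt hA (pos_iff_ne_zero.mpr hA0) hδ
  have hBfin : μ B < ∞ := hBδ.trans ENNReal.ofReal_lt_top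
  have hBsmall : μ.real B < ε / (M ^ 2 + 1) := ENNReal.toReal_lt_of_lt_ofReal hBδ
  have hc : |∫ y in B, η y ∂μ| ≤ M * μ.real B :=
    norm_setIntegral_le_of_norm_le_const (f := η) hBfin fun x hx => (hBA hx).2.2
  obtain ⟨x, hxB, hx⟩ : ∃ x ∈ B, u x ≤ (∫ y in B, η y ∂μ) * g x := by
    by_contra! h
    exact hB0.ne' (measure_eq_zero_iff_ae_notMem.mpr ((hle B hB hBfin).mono fun x hx hxB =>
      (h x hxB).not_ge (hx hxB)))
  obtain ⟨hεu, hgx, -⟩ := hBA hxB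
  have hbound : ε ≤ M * μ.real B * M :=
    calc ε ≤ (∫ y in B, η y ∂μ) * g x := hεu.trans hx
      _ ≤ |∫ y in B, η y ∂μ| * |g x| := by rw [← abs_mul]; exact le_abs_self _
      _ ≤ M * μ.real B * M := mul_le_mul hc hgx (abs_nonneg _) ((abs_nonneg _).trans hc)
  rw [lt_div_iff₀ (by positivity)] at hBsmall
  nlinarith [hbound, measureReal_nonneg (μ := μ) (s := B)]

lemma IsDiffuse.ae_eq_zero_of_forall_le_setIntegral_mul (hd : IsDiffuse μ)
    (hu : Measurable u) (hg : Measurable g) (hη : Measurable η) (hu0 : 0 ≤ᵐ[μ] u)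
    (hle : ∀ B, MeasurableSet B → μ B < ∞ → ∀ᵐ x ∂μ, x ∈ B → u x ≤ (∫ y in B, η y ∂μ) * g x) :
    u =ᵐ[μ] 0 := by
  have hnull : ∀ᵐ x ∂μ, ∀ nM : ℕ × ℕ,
      x ∉ {x | ((nM.1 : ℝ) + 1)⁻¹ ≤ u x ∧ |g x| ≤ nM.2 ∧ |η x| ≤ nM.2} :=
    ae_all_iff.mpr fun nM => measure_eq_zero_iff_ae_notMem.mp
      (hd.measure_setOf_le_of_forall_le_setIntegral_mul hu hg hη hle (by positivity) _)
  filter_upwards [hnull, hu0] with x hx hx0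
  by_contra hne
  obtain ⟨n, hn⟩ := exists_nat_one_div_lt (lt_of_le_of_ne hx0 (Ne.symm hne))
  obtain ⟨M, hM⟩ := exists_nat_ge (max |g x| |η x|)
  exact hx (n, M) ⟨by simpa using hn.le, (le_max_left _ _).trans hM, (le_max_right _ _).trans hM⟩

end

theorem stmt3_general {Ω : Type*} [MeasurableSpace Ω]
    (μ : Measure Ω) (hdiffuse : IsDiffuse μ)
    (p q : ℝ≥0∞)
    (η : Ω → ℝ) (hη : MemLp η q μ)
    (g : Ω → ℝ) (hg : MemLp g p μ)
    (u : Ω → ℝ) (hu : MemLp u ∞ μ) (hu0 : 0 ≤ᵐ[μ] u)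
    (hle : ∀ f : Ω → ℝ, MemLp f p μ → 0 ≤ᵐ[μ] f →
      ∀ᵐ x ∂μ, u x * f x ≤ (∫ y, η y * f y ∂μ) * g x) :
    u =ᵐ[μ] 0 := by
  refine hu.1.ae_eq_mk.trans <| hdiffuse.ae_eq_zero_of_forall_le_setIntegral_mul
    hu.1.stronglyMeasurable_mk.measurable hg.1.stronglyMeasurable_mk.measurable
    hη.1.stronglyMeasurable_mk.measurable (hu0.trans_eq hu.1.ae_eq_mk) fun B hB hBfin => ?_
  have hint : ∫ y in B, hη.1.mk η y ∂μ = ∫ y, η y * B.indicator 1 y ∂μ := by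
    rw [integral_congr_ae (ae_restrict_of_ae hη.1.ae_eq_mk.symm), ← integral_indicator hB]
    congr 1
    ext y
    by_cases hy : y ∈ B <;> simp [hy]
  filter_upwards [hle (B.indicator 1) (memLp_indicator_const p hB 1 (Or.inr hBfin.ne))
    (ae_of_all _ (Set.indicator_nonneg fun _ _ => zero_le_one)), hu.1.ae_eq_mk, hg.1.ae_eq_mk]
    with x hx hux hgx hxB
  simpa [hint, ← hux, ← hgx, hxB] using hx

theorem stmt3 {Ω : Type*} [MeasurableSpace Ω]
    (μ : Measure Ω) [SigmaFinite μ] (hdiffuse : IsDiffuse μ)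
    (p q : ℝ≥0∞) (hp1 : 1 ≤ p) (hp : p ≠ ∞) (hpq : 1 / p + 1 / q = 1)
    (η : Ω → ℝ) (hη : MemLp η q μ) (hη0 : 0 ≤ᵐ[μ] η)
    (g : Ω → ℝ) (hg : MemLp g p μ) (hg0 : 0 ≤ᵐ[μ] g)
    (u : Ω → ℝ) (hu : MemLp u ∞ μ) (hu0 : 0 ≤ᵐ[μ] u)
    (hle : ∀ f : Ω → ℝ, MemLp f p μ → 0 ≤ᵐ[μ] f →
      ∀ᵐ x ∂μ, u x * f x ≤ (∫ y, η y * f y ∂μ) * g x) :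
    u =ᵐ[μ] 0 :=
  stmt3_general μ hdiffuse p q η hη g hg u hu hu0 hle
end

section
/- Let (Ω,𝒜,μ) be a σ-finite measure space, 1 ≤ p < ∞, and let (B_n)_{n∈ℕ} be pairwise disjoint measurable sets with Ω = ⋃_{n∈ℕ} B_n, where each B_n is either an atom of μ or a μ-null set. Let (d_n)_{n∈ℕ} be a sequence of scalars with d_n → 0, and let v := Σ_{n∈ℕ} d_n 1_{B_n} ∈ L∞(μ). Then the multiplication operator M_v on L_p(μ) is compact. -/
/-!
On an atom, or a null set, of finite measure every measurable function is a.e. constant, so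
multiplication by `1_{B n}` has rank at most one. The truncations `∑_{n<N} d n • 1_{B n}` converge
to `v` in `L∞` because `d n → 0`, and `w ↦ M_w` is continuous from `L∞` to the operators on `Lp`;
hence `M_v` is a norm limit of finite-rank operators.
-/
open MeasureTheory Filter ENNReal

section MeasureDichotomy

variable {Ω : Type*} [MeasurableSpace Ω] {μ : Measure Ω} {B : Set Ω}

theorem IsAtomSet.measure_ne_top [SigmaFinite μ] (hB : IsAtomSet μ B) : μ B ≠ ∞ := by
  obtain ⟨t, ht, htB, ht_pos, ht_fin⟩ := Measure.exists_subset_measure_lt_top hB.1 hB.2.1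
  rcases hB.2.2 t htB ht with h | h
  · exact absurd h ht_pos.ne'
  · exact h ▸ ht_fin.ne

theorem exists_ae_restrict_eq_const_of_measure_dichotomy {β : Type*} [MeasurableSpace β]
    [MeasurableSpace.CountablySeparated β] [Nonempty β] (hB : MeasurableSet B) (hμB : μ B ≠ ∞)
    (hdich : ∀ A ⊆ B, MeasurableSet A → μ A = 0 ∨ μ A = μ B) {f : Ω → β}
    (hf : AEMeasurable f (μ.restrict B)) : ∃ c, ∀ᵐ x ∂μ.restrict B, f x = c := by
  suffices ∃ c, hf.mk f =ᵐ[μ.restrict B] fun _ => c by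
    obtain ⟨c, hc⟩ := this
    exact ⟨c, hf.ae_eq_mk.trans hc⟩
  have : IsFiniteMeasure (μ.restrict B) := isFiniteMeasure_restrict.2 hμB
  refine exists_eventuallyEq_const_of_forall_separating MeasurableSet fun U hU => ?_
  have hpre : MeasurableSet (hf.mk f ⁻¹' U) := hf.measurable_mk hU
  rcases hdich _ Set.inter_subset_right (hpre.inter hB) with h | h
  · right
    rw [ae_iff]
    simp_rw [not_not]
    exact (Measure.restrict_apply hpre).trans h
  · left
    rw [ae_iff]
    change μ.restrict B (hf.mk f ⁻¹' U)ᶜ = 0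
    rw [measure_compl hpre (measure_ne_top _ _),
      Measure.restrict_apply hpre, Measure.restrict_apply_univ, h, tsub_self]

end MeasureDichotomy

theorem isCompactOperator_of_forall_mem_finiteDimensional {𝕜 X Y : Type*}
    [NontriviallyNormedField 𝕜] [ProperSpace 𝕜]
    [NormedAddCommGroup X] [NormedAddCommGroup Y] [NormedSpace 𝕜 X] [NormedSpace 𝕜 Y]
    (T : X →L[𝕜] Y) (V : Submodule 𝕜 Y) [FiniteDimensional 𝕜 V] (hT : ∀ x, T x ∈ V) :
    IsCompactOperator T :=
  have : ProperSpace V := FiniteDimensional.proper 𝕜 V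
  (isCompactOperator_of_locallyCompactSpace_dom (T.codRestrict V hT)).clm_comp V.subtypeL

theorem Pairwise.indicator_apply_eq_ite {ι α M : Type*} [DecidableEq ι] [Zero M] {B : ι → Set α}
    (hB : Pairwise (Function.onFun Disjoint B)) {m : ι} {x : α} (hx : x ∈ B m) (n : ι)
    (f : α → M) : (B n).indicator f x = if n = m then f x else 0 := by
  split_ifs with hnm
  · exact Set.indicator_of_mem (hnm ▸ hx) f
  · exact Set.indicator_of_notMem (fun hxn => (hB hnm).ne_of_mem hxn hx rfl) f

namespace MeasureTheory.Lp

variable {Ω : Type*} [MeasurableSpace Ω] {μ : Measure Ω}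

theorem coeFn_finset_sum {ι E : Type*} [NormedAddCommGroup E] {p : ℝ≥0∞} (s : Finset ι)
    (f : ι → Lp E p μ) : ⇑(∑ i ∈ s, f i) =ᵐ[μ] ∑ i ∈ s, ⇑(f i) := by
  classical
  induction s using Finset.induction_on with
  | empty => simpa using Lp.coeFn_zero E p μ
  | insert i s hi ih =>
    simp only [Finset.sum_insert hi]
    exact (Lp.coeFn_add _ _).trans (EventuallyEq.rfl.add ih)

theorem norm_le_of_ae_bound_top {E : Type*} [NormedAddCommGroup E] {f : Lp E ∞ μ} {C : ℝ}
    (hC : 0 ≤ C) (hf : ∀ᵐ x ∂μ, ‖f x‖ ≤ C) : ‖f‖ ≤ C := by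
  rw [Lp.norm_def, eLpNorm_exponent_top]
  exact ENNReal.toReal_le_of_le_ofReal hC (eLpNormEssSup_le_of_ae_bound hf)

theorem tendsto_sum_smul_indicatorConstLp_top {𝕜 : Type*} [NormedField 𝕜] {B : ℕ → Set Ω}
    (hB : ∀ n, MeasurableSet (B n)) (hμB : ∀ n, μ (B n) ≠ ∞)
    (hdisj : Pairwise (Function.onFun Disjoint B)) (hcover : ⋃ n, B n = Set.univ)
    {d : ℕ → 𝕜} (hd : Tendsto d atTop (nhds 0))
    {v : Ω → 𝕜} (hv : ∀ n, ∀ x ∈ B n, v x = d n) (hvL : MemLp v ∞ μ) :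
    Tendsto (fun N => ∑ n ∈ Finset.range N, d n • indicatorConstLp ∞ (hB n) (hμB n) (1 : 𝕜))
      atTop (nhds (hvL.toLp v)) := by
  rw [Metric.tendsto_atTop]
  intro ε hε
  obtain ⟨N₀, hN₀⟩ := Metric.tendsto_atTop.1 hd (ε / 2) (half_pos hε)
  refine ⟨N₀, fun N hN => ?_⟩
  rw [dist_eq_norm']
  refine (norm_le_of_ae_bound_top (half_pos hε).le ?_).trans_lt (half_lt_self hε)
  set e : ℕ → Lp 𝕜 ∞ μ := fun n => d n • indicatorConstLp ∞ (hB n) (hμB n) (1 : 𝕜)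
  have he : ∀ᵐ x ∂μ, ∀ n, e n x = d n * (B n).indicator (fun _ => 1) x := by
    refine ae_all_iff.2 fun n => ?_
    filter_upwards [Lp.coeFn_smul (d n) (indicatorConstLp ∞ (hB n) (hμB n) (1 : 𝕜)),
      indicatorConstLp_coeFn (hs := hB n) (hμs := hμB n) (c := (1 : 𝕜))] with x h1 h2
    rw [h1, Pi.smul_apply, h2, smul_eq_mul]
  filter_upwards [Lp.coeFn_sub (hvL.toLp v) (∑ n ∈ Finset.range N, e n), hvL.coeFn_toLp,
    coeFn_finset_sum (Finset.range N) e, he] with x h1 h2 h3 h4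
  obtain ⟨m, hm⟩ := Set.mem_iUnion.1 (hcover ▸ Set.mem_univ x)
  simp only [h1, Pi.sub_apply, h2, h3, Finset.sum_apply, h4, hdisj.indicator_apply_eq_ite hm,
    hv m x hm, mul_ite, mul_one, mul_zero, Finset.sum_ite_eq', Finset.mem_range]
  split_ifs with h
  · simpa using (half_pos hε).le
  · simpa using (hN₀ m (by omega)).le

variable {𝕜 : Type*} [RCLike 𝕜] (μ) (p : ℝ≥0∞) [Fact (1 ≤ p)]

noncomputable def mulL : Lp 𝕜 ∞ μ →L[𝕜] Lp 𝕜 p μ →L[𝕜] Lp 𝕜 p μ :=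
  (ContinuousLinearMap.mul 𝕜 𝕜).holderL μ ∞ p p

theorem coeFn_mulL (w : Lp 𝕜 ∞ μ) (f : Lp 𝕜 p μ) :
    mulL μ p w f =ᵐ[μ] fun x => w x * f x :=
  (ContinuousLinearMap.mul 𝕜 𝕜).coeFn_holder w f

theorem isCompactOperator_mulL_indicatorConstLp {B : Set Ω} (hB : MeasurableSet B)
    (hμB : μ B ≠ ∞) (hdich : ∀ A ⊆ B, MeasurableSet A → μ A = 0 ∨ μ A = μ B) :
    IsCompactOperator (mulL μ p (indicatorConstLp ∞ hB hμB (1 : 𝕜))) := by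
  refine isCompactOperator_of_forall_mem_finiteDimensional _
    (𝕜 ∙ indicatorConstLp p hB hμB (1 : 𝕜)) fun f => ?_
  obtain ⟨c, hc⟩ := exists_ae_restrict_eq_const_of_measure_dichotomy hB hμB hdich
    (Lp.aestronglyMeasurable f).aemeasurable.restrict
  refine Submodule.mem_span_singleton.2 ⟨c, Lp.ext ?_⟩
  filter_upwards [Lp.coeFn_smul c (indicatorConstLp p hB hμB (1 : 𝕜)), coeFn_mulL μ p _ f,
    indicatorConstLp_coeFn (p := p) (hs := hB) (hμs := hμB) (c := (1 : 𝕜)),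
    indicatorConstLp_coeFn (p := ∞) (hs := hB) (hμs := hμB) (c := (1 : 𝕜)),
    (ae_restrict_iff' hB).1 hc] with x h1 h2 h3 h4 h5
  rw [h1, h2, Pi.smul_apply, h3, h4]
  by_cases hx : x ∈ B <;> simp [hx, h5]

end MeasureTheory.Lp

theorem stmt8_general {Ω : Type*} [MeasurableSpace Ω] {𝕜 : Type*} [RCLike 𝕜]
    (μ : Measure Ω) [SigmaFinite μ]
    (p : ℝ≥0∞) [Fact (1 ≤ p)]
    (B : ℕ → Set Ω) (hBmeas : ∀ n, MeasurableSet (B n))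
    (hBdisj : Pairwise (Function.onFun Disjoint B)) (hBunion : (⋃ n, B n) = Set.univ)
    (hBatom : ∀ n, IsAtomSet μ (B n) ∨ μ (B n) = 0)
    (d : ℕ → 𝕜) (hd : Filter.Tendsto d Filter.atTop (nhds 0))
    (v : Ω → 𝕜) (hv : ∀ n, ∀ x ∈ B n, v x = d n) (hvL : MemLp v ∞ μ)
    (Mv : Lp 𝕜 p μ →L[𝕜] Lp 𝕜 p μ)
    (hMv : ∀ f : Lp 𝕜 p μ, (Mv f : Ω → 𝕜) =ᵐ[μ] fun x => v x * f x) :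
    IsCompactOperator Mv := by
  have hdich : ∀ n, ∀ A ⊆ B n, MeasurableSet A → μ A = 0 ∨ μ A = μ (B n) := fun n A hA hAm =>
    (hBatom n).elim (fun h => h.2.2 A hA hAm) fun h => Or.inl (measure_mono_null hA h)
  have hfin : ∀ n, μ (B n) ≠ ∞ := fun n =>
    (hBatom n).elim IsAtomSet.measure_ne_top fun h => h ▸ zero_ne_top
  have hMv_eq : Mv = Lp.mulL μ p (hvL.toLp v) := by
    ext1 f
    refine Lp.ext ?_
    filter_upwards [hMv f, Lp.coeFn_mulL μ p (hvL.toLp v) f, hvL.coeFn_toLp] with x h1 h2 h3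
    rw [h1, h2, h3]
  rw [hMv_eq]
  refine isCompactOperator_of_tendsto (((Lp.mulL μ p).continuous.tendsto _).comp
    (Lp.tendsto_sum_smul_indicatorConstLp_top hBmeas hfin hBdisj hBunion hd hv hvL))
    (Eventually.of_forall fun N => ?_)
  simp only [Function.comp_apply, map_sum, map_smul]
  exact Submodule.sum_mem (compactOperator _ _ _) fun n _ => Submodule.smul_mem _ _
    (Lp.isCompactOperator_mulL_indicatorConstLp μ p (hBmeas n) (hfin n) (hdich n))

theorem stmt8 {Ω : Type*} [MeasurableSpace Ω] {𝕜 : Type*} [RCLike 𝕜]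
    (μ : Measure Ω) [SigmaFinite μ]
    (p : ℝ≥0∞) [Fact (1 ≤ p)] (hp : p ≠ ∞)
    (B : ℕ → Set Ω) (hBmeas : ∀ n, MeasurableSet (B n))
    (hBdisj : Pairwise (Function.onFun Disjoint B)) (hBunion : (⋃ n, B n) = Set.univ)
    (hBatom : ∀ n, IsAtomSet μ (B n) ∨ μ (B n) = 0)
    (d : ℕ → 𝕜) (hd : Filter.Tendsto d Filter.atTop (nhds 0))
    (v : Ω → 𝕜) (hv : ∀ n, ∀ x ∈ B n, v x = d n) (hvL : MemLp v ∞ μ)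
    (Mv : Lp 𝕜 p μ →L[𝕜] Lp 𝕜 p μ)
    (hMv : ∀ f : Lp 𝕜 p μ, (Mv f : Ω → 𝕜) =ᵐ[μ] fun x => v x * f x) :
    IsCompactOperator Mv :=
  stmt8_general μ p B hBmeas hBdisj hBunion hBatom d hd v hv hvL Mv hMv
end

section
/- Let (Ω,𝒜,μ) be a σ-finite measure space, 1 ≤ p < ∞, and let (B_n)_{n∈ℕ} be pairwise disjoint measurable sets with Ω = ⋃_{n∈ℕ} B_n, where each B_n is either an atom of μ or a μ-null set. Let u ∈ L∞(μ) and let K be a compact linear operator on L_p(μ). For each n let P_n denote multiplication by 1_{B_n}, and let d_n be the scalar such that P_n K P_n = d_n P_n (with d_n := 0 if μ(B_n) = 0). Let v := Σ_{n∈ℕ} d_n 1_{B_n} ∈ L∞(μ). Then ‖M_u + K‖ ≥ ‖M_u + M_v‖. -/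
open MeasureTheory ENNReal

section Partition

variable {Ω E F : Type*} [MeasurableSpace Ω] [NormedAddCommGroup E] [NormedAddCommGroup F]
  {μ : Measure Ω} {p : ℝ≥0∞} {B : ℕ → Set Ω}

theorem eLpNorm_rpow_toReal_eq_lintegral (hp0 : p ≠ 0) (hp : p ≠ ∞) (f : Ω → E) :
    eLpNorm f p μ ^ p.toReal = ∫⁻ x, ‖f x‖ₑ ^ p.toReal ∂μ := by
  lift p to NNReal using hp
  exact eLpNorm_nnreal_pow_eq_lintegral (by exact_mod_cast hp0)

theorem eLpNorm_rpow_toReal_eq_tsum_indicator (hp0 : p ≠ 0) (hp : p ≠ ∞)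
    (hBmeas : ∀ n, MeasurableSet (B n)) (hBdisj : Pairwise (Function.onFun Disjoint B))
    (hBunion : ⋃ n, B n = Set.univ) (f : Ω → E) :
    eLpNorm f p μ ^ p.toReal = ∑' n, eLpNorm ((B n).indicator f) p μ ^ p.toReal := by
  simp_rw [eLpNorm_indicator_eq_eLpNorm_restrict (hBmeas _),
    eLpNorm_rpow_toReal_eq_lintegral hp0 hp]
  rw [← lintegral_iUnion hBmeas hBdisj, hBunion, Measure.restrict_univ]

theorem eLpNorm_le_of_forall_indicator_le (hp0 : p ≠ 0) (hp : p ≠ ∞)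
    (hBmeas : ∀ n, MeasurableSet (B n)) (hBdisj : Pairwise (Function.onFun Disjoint B))
    (hBunion : ⋃ n, B n = Set.univ) {f : Ω → E} {g : Ω → F} {C : ℝ≥0∞}
    (h : ∀ n, eLpNorm ((B n).indicator g) p μ ≤ C * eLpNorm ((B n).indicator f) p μ) :
    eLpNorm g p μ ≤ C * eLpNorm f p μ := by
  have hr : 0 < p.toReal := ENNReal.toReal_pos hp0 hp
  rw [← ENNReal.rpow_le_rpow_iff hr, ENNReal.mul_rpow_of_nonneg _ _ hr.le,
    eLpNorm_rpow_toReal_eq_tsum_indicator hp0 hp hBmeas hBdisj hBunion,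
    eLpNorm_rpow_toReal_eq_tsum_indicator hp0 hp hBmeas hBdisj hBunion f,
    ← ENNReal.tsum_mul_left]
  refine ENNReal.tsum_le_tsum fun n => ?_
  rw [← ENNReal.mul_rpow_of_nonneg _ _ hr.le]
  exact ENNReal.rpow_le_rpow (h n) hr.le

end Partition

section Multiplication

variable {Ω 𝕜 : Type*} [MeasurableSpace Ω] [RCLike 𝕜] {μ : Measure Ω} {p : ℝ≥0∞} [Fact (1 ≤ p)]
  {s : Set Ω} {P M : Lp 𝕜 p μ →L[𝕜] Lp 𝕜 p μ} {w : Ω → 𝕜}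

theorem enorm_apply_eq_eLpNorm_indicator
    (hP : ∀ f : Lp 𝕜 p μ, (P f : Ω → 𝕜) =ᵐ[μ] s.indicator f) (f : Lp 𝕜 p μ) :
    ‖P f‖ₑ = eLpNorm (s.indicator f) p μ := by
  rw [Lp.enorm_def, eLpNorm_congr_ae (hP f)]

theorem comp_mul_comp_eq_comp_mul (hP : ∀ f : Lp 𝕜 p μ, (P f : Ω → 𝕜) =ᵐ[μ] s.indicator f)
    (hM : ∀ f : Lp 𝕜 p μ, (M f : Ω → 𝕜) =ᵐ[μ] fun x => w x * f x) :
    P ∘L M ∘L P = P ∘L M := by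
  ext1 f
  refine Lp.ext ?_
  filter_upwards [hP (M (P f)), hM (P f), hP f, hP (M f), hM f] with x h1 h2 h3 h4 h5
  simp only [ContinuousLinearMap.comp_apply, h1, h4]
  by_cases hx : x ∈ s <;> simp [hx, h2, h3, h5]

theorem comp_mul_eq_smul_of_eqOn (hP : ∀ f : Lp 𝕜 p μ, (P f : Ω → 𝕜) =ᵐ[μ] s.indicator f)
    (hM : ∀ f : Lp 𝕜 p μ, (M f : Ω → 𝕜) =ᵐ[μ] fun x => w x * f x) {c : 𝕜}
    (hw : ∀ x ∈ s, w x = c) :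
    P ∘L M = c • P := by
  ext1 f
  refine Lp.ext ?_
  filter_upwards [hP (M f), hM f, hP f, Lp.coeFn_smul c (P f)] with x h1 h2 h3 h4
  simp only [ContinuousLinearMap.comp_apply, FunLike.coe_smul, Pi.smul_apply, h1, h4, h3,
    smul_eq_mul]
  by_cases hx : x ∈ s <;> simp [hx, h2, hw]

end Multiplication

theorem stmt9_general {Ω : Type*} [MeasurableSpace Ω] {𝕜 : Type*} [RCLike 𝕜]
    (μ : Measure Ω)
    (p : ℝ≥0∞) [Fact (1 ≤ p)] (hp : p ≠ ∞)
    (B : ℕ → Set Ω) (hBmeas : ∀ n, MeasurableSet (B n))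
    (hBdisj : Pairwise (Function.onFun Disjoint B)) (hBunion : (⋃ n, B n) = Set.univ)
    (u : Ω → 𝕜)
    (Mu : Lp 𝕜 p μ →L[𝕜] Lp 𝕜 p μ)
    (hMu : ∀ f : Lp 𝕜 p μ, (Mu f : Ω → 𝕜) =ᵐ[μ] fun x => u x * f x)
    (K : Lp 𝕜 p μ →L[𝕜] Lp 𝕜 p μ)
    (P : ℕ → (Lp 𝕜 p μ →L[𝕜] Lp 𝕜 p μ))
    (hP : ∀ n, ∀ f : Lp 𝕜 p μ, (P n f : Ω → 𝕜) =ᵐ[μ] (B n).indicator f)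
    (d : ℕ → 𝕜) (hd : ∀ n, P n ∘L K ∘L P n = d n • P n)
    (v : Ω → 𝕜) (hv : ∀ n, ∀ x ∈ B n, v x = d n)
    (Mv : Lp 𝕜 p μ →L[𝕜] Lp 𝕜 p μ)
    (hMv : ∀ f : Lp 𝕜 p μ, (Mv f : Ω → 𝕜) =ᵐ[μ] fun x => v x * f x) :
    ‖Mu + K‖ ≥ ‖Mu + Mv‖ := by
  have hblock : ∀ n, P n ∘L (Mu + K) ∘L P n = P n ∘L (Mu + Mv) := fun n => by
    rw [ContinuousLinearMap.add_comp, ContinuousLinearMap.comp_add, ContinuousLinearMap.comp_add,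
      comp_mul_comp_eq_comp_mul (hP n) hMu, hd, comp_mul_eq_smul_of_eqOn (hP n) hMv (hv n)]
  have hp0 : p ≠ 0 := (zero_lt_one.trans_le Fact.out).ne'
  suffices ‖Mu + Mv‖ₑ ≤ ‖Mu + K‖ₑ by
    simpa only [toReal_enorm] using ENNReal.toReal_mono enorm_ne_top this
  refine ContinuousLinearMap.opENorm_le_bound _ fun f => ?_
  simp only [Lp.enorm_def]
  refine eLpNorm_le_of_forall_indicator_le hp0 hp hBmeas hBdisj hBunion fun n => ?_
  simp only [← enorm_apply_eq_eLpNorm_indicator (hP n)]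
  calc ‖P n ((Mu + Mv) f)‖ₑ = ‖P n ((Mu + K) (P n f))‖ₑ := by
        rw [← ContinuousLinearMap.comp_apply, ← hblock]; rfl
    _ ≤ ‖(Mu + K) (P n f)‖ₑ := by
        rw [enorm_apply_eq_eLpNorm_indicator (hP n), Lp.enorm_def]
        exact eLpNorm_indicator_le _
    _ ≤ ‖Mu + K‖ₑ * ‖P n f‖ₑ := (Mu + K).le_opENorm _

theorem stmt9 {Ω : Type*} [MeasurableSpace Ω] {𝕜 : Type*} [RCLike 𝕜]
    (μ : Measure Ω) [SigmaFinite μ]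
    (p : ℝ≥0∞) [Fact (1 ≤ p)] (hp : p ≠ ∞)
    (B : ℕ → Set Ω) (hBmeas : ∀ n, MeasurableSet (B n))
    (hBdisj : Pairwise (Function.onFun Disjoint B)) (hBunion : (⋃ n, B n) = Set.univ)
    (hBatom : ∀ n, IsAtomSet μ (B n) ∨ μ (B n) = 0)
    (u : Ω → 𝕜) (hu : MemLp u ∞ μ)
    (Mu : Lp 𝕜 p μ →L[𝕜] Lp 𝕜 p μ)
    (hMu : ∀ f : Lp 𝕜 p μ, (Mu f : Ω → 𝕜) =ᵐ[μ] fun x => u x * f x)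
    (K : Lp 𝕜 p μ →L[𝕜] Lp 𝕜 p μ) (hK : IsCompactOperator K)
    (P : ℕ → (Lp 𝕜 p μ →L[𝕜] Lp 𝕜 p μ))
    (hP : ∀ n, ∀ f : Lp 𝕜 p μ, (P n f : Ω → 𝕜) =ᵐ[μ] (B n).indicator f)
    (d : ℕ → 𝕜) (hd : ∀ n, P n ∘L K ∘L P n = d n • P n)
    (hd0 : ∀ n, μ (B n) = 0 → d n = 0)
    (v : Ω → 𝕜) (hv : ∀ n, ∀ x ∈ B n, v x = d n) (hvL : MemLp v ∞ μ)
    (Mv : Lp 𝕜 p μ →L[𝕜] Lp 𝕜 p μ)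
    (hMv : ∀ f : Lp 𝕜 p μ, (Mv f : Ω → 𝕜) =ᵐ[μ] fun x => v x * f x) :
    ‖Mu + K‖ ≥ ‖Mu + Mv‖ :=
  stmt9_general μ p hp B hBmeas hBdisj hBunion u Mu hMu K P hP d hd v hv Mv hMv
end

section
/- Let (Ω,𝒜,μ) be a σ-finite measure space, 1 ≤ p < ∞, with conjugate exponent q (1/p + 1/q = 1), and let (B_n)_{n∈ℕ} be pairwise disjoint measurable sets with Ω = ⋃_{n∈ℕ} B_n, where each B_n is either an atom of μ or a μ-null set. Fix j ∈ ℕ, let η ∈ L_q(μ) with η ≥ 0, and define the positive rank-one operator K on L_p(μ) by K f := (∫_{Ω \ B_j} f η dμ) · 1_{B_j}. If u ∈ L∞(μ) with u ≥ 0 satisfies M_u f ≤ K f for all f ∈ L_p(μ) with f ≥ 0, then u = 0 (a.e.). -/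
open MeasureTheory Filter ENNReal

/-!
Test the domination against indicators of finite-measure sets `t`. For `t ⊆ B j` the functional
`∫_{(B j)ᶜ} f η` vanishes, and for `t ⊆ (B j)ᶜ` the indicator of `B j` vanishes on `t`; either
way `u ≤ 0` a.e. on `t`. Since `μ` is σ-finite this gives `u ≤ 0` a.e., hence `u = 0` as `u ≥ 0`.
-/

section RankOneDomination

variable {Ω : Type*} [MeasurableSpace Ω] {μ : Measure Ω} {u : Ω → ℝ} {t : Set Ω}

lemma ae_restrict_nonpos_of_mul_indicator_le {g : Ω → ℝ} (ht : MeasurableSet t)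
    (h : ∀ᵐ x ∂μ, u x * t.indicator (fun _ => (1 : ℝ)) x ≤ g x) (hg : ∀ x ∈ t, g x = 0) :
    ∀ᵐ x ∂μ.restrict t, u x ≤ 0 := by
  rw [ae_restrict_iff' ht]
  filter_upwards [h] with x hx hxt
  simpa [Set.indicator_of_mem hxt, hg x hxt] using hx

lemma setIntegral_compl_indicator_inter_mul_eq_zero (s : Set Ω) (η : Ω → ℝ) :
    ∫ y in sᶜ, (s ∩ t).indicator (fun _ => (1 : ℝ)) y * η y ∂μ = 0 :=
  setIntegral_eq_zero_of_forall_eq_zero fun _ hy => by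
    rw [Set.indicator_of_notMem (fun h => hy h.1), zero_mul]

variable {p : ℝ≥0∞} {s : Set Ω} {η : Ω → ℝ}

lemma ae_restrict_nonpos_of_mul_le_indicator_setIntegral_compl
    (hs : MeasurableSet s) (ht : MeasurableSet t) (htμ : μ t ≠ ∞)
    (hle : ∀ f : Ω → ℝ, MemLp f p μ → 0 ≤ᵐ[μ] f →
      ∀ᵐ x ∂μ, u x * f x ≤ (∫ y in sᶜ, f y * η y ∂μ) * s.indicator (fun _ => (1 : ℝ)) x) :
    ∀ᵐ x ∂μ.restrict t, u x ≤ 0 := by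
  have hle_indicator : ∀ r ⊆ t, MeasurableSet r →
      ∀ᵐ x ∂μ, u x * r.indicator (fun _ => (1 : ℝ)) x ≤
        (∫ y in sᶜ, r.indicator (fun _ => (1 : ℝ)) y * η y ∂μ) *
          s.indicator (fun _ => (1 : ℝ)) x := fun r hrt hr =>
    hle _ (memLp_indicator_const p hr 1 (Or.inr (measure_ne_top_of_subset hrt htμ)))
      (Eventually.of_forall fun _ => Set.indicator_nonneg (fun _ _ => zero_le_one) _)
  have on_s : ∀ᵐ x ∂μ.restrict (s ∩ t), u x ≤ 0 :=
    ae_restrict_nonpos_of_mul_indicator_le (hs.inter ht)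
      (hle_indicator _ Set.inter_subset_right (hs.inter ht)) fun x _ => by
        rw [setIntegral_compl_indicator_inter_mul_eq_zero, zero_mul]
  have off_s : ∀ᵐ x ∂μ.restrict (sᶜ ∩ t), u x ≤ 0 :=
    ae_restrict_nonpos_of_mul_indicator_le (hs.compl.inter ht)
      (hle_indicator _ Set.inter_subset_right (hs.compl.inter ht)) fun x hx => by
        rw [Set.indicator_of_notMem hx.1, mul_zero]
  rw [← Set.inter_union_compl t s, Set.inter_comm, Set.inter_comm t]
  exact (ae_restrict_union_iff _ _ _).2 ⟨on_s, off_s⟩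

end RankOneDomination

theorem stmt12_general {Ω : Type*} [MeasurableSpace Ω]
    (μ : Measure Ω) [SigmaFinite μ]
    (p : ℝ≥0∞)
    (B : ℕ → Set Ω) (hBmeas : ∀ n, MeasurableSet (B n))
    (j : ℕ) (η : Ω → ℝ)
    (u : Ω → ℝ) (hu0 : 0 ≤ᵐ[μ] u)
    (hle : ∀ f : Ω → ℝ, MemLp f p μ → 0 ≤ᵐ[μ] f →
      ∀ᵐ x ∂μ, u x * f x ≤ (∫ y in (B j)ᶜ, f y * η y ∂μ) *
        (B j).indicator (fun _ => (1 : ℝ)) x) :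
    u =ᵐ[μ] 0 := by
  have hu_nonpos : ∀ᵐ x ∂μ, u x ≤ 0 :=
    ae_of_forall_measure_lt_top_ae_restrict _ fun t ht htμ =>
      ae_restrict_nonpos_of_mul_le_indicator_setIntegral_compl (hBmeas j) ht htμ.ne hle
  filter_upwards [hu0, hu_nonpos] with x h0 h1 using le_antisymm h1 h0

theorem stmt12 {Ω : Type*} [MeasurableSpace Ω]
    (μ : Measure Ω) [SigmaFinite μ]
    (p q : ℝ≥0∞) (hp1 : 1 ≤ p) (hp : p ≠ ∞) (hpq : 1 / p + 1 / q = 1)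
    (B : ℕ → Set Ω) (hBmeas : ∀ n, MeasurableSet (B n))
    (hBdisj : Pairwise (Function.onFun Disjoint B)) (hBunion : (⋃ n, B n) = Set.univ)
    (hBatom : ∀ n, IsAtomSet μ (B n) ∨ μ (B n) = 0)
    (j : ℕ) (η : Ω → ℝ) (hη : MemLp η q μ) (hη0 : 0 ≤ᵐ[μ] η)
    (u : Ω → ℝ) (hu : MemLp u ∞ μ) (hu0 : 0 ≤ᵐ[μ] u)
    (hle : ∀ f : Ω → ℝ, MemLp f p μ → 0 ≤ᵐ[μ] f →
      ∀ᵐ x ∂μ, u x * f x ≤ (∫ y in (B j)ᶜ, f y * η y ∂μ) *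
        (B j).indicator (fun _ => (1 : ℝ)) x) :
    u =ᵐ[μ] 0 :=
  stmt12_general μ p B hBmeas j η u hu0 hle
end
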